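/- For every finite-dimensional irreducible complex G-representation V and every element Z of the center of A^G, there is a scalar χ(Z) ∈ ℂ such that Z ∘ T = χ(Z)·T for all T ∈ Hom_G(V, L); if Hom_G(V, L) ≠ 0, the map Z ↦ χ(Z) is a ℂ-algebra homomorphism from the center of A^G to ℂ (the central character of the A^G-module Hom_G(V, L)). (Abstract Frobenius decomposition, Theorem 2.2, part 3.) -/

import Mathlib

/-- Conjugation action of a group element on endomorphisms of `L`:
`g · T := ρ(g) ∘ T ∘ ρ(g)⁻¹`. -/
def conjEnd {G L : Type*} [Group G] [AddCommGroup L] [Module ℂ L]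
    (ρ : Representation ℂ G L) (g : G) :
    Module.End ℂ L →ₗ[ℂ] Module.End ℂ L where
  toFun T := ρ g ∘ₗ T ∘ₗ ρ g⁻¹
  map_add' T S := by ext v; simp
  map_smul' c T := by ext v; simp

/-- `Z` is a `G`-invariant element of `A` lying in the center of the invariant
algebra `A^G`. -/
def IsCentralInvariant {G L : Type*} [Group G] [AddCommGroup L] [Module ℂ L]
    (ρ : Representation ℂ G L) (A : Subalgebra ℂ (Module.End ℂ L))
    (Z : Module.End ℂ L) : Prop :=
  Z ∈ A ∧ (∀ g : G, conjEnd ρ g Z = Z) ∧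
    ∀ D ∈ A, (∀ g : G, conjEnd ρ g D = D) → Z * D = D * Z

/-- The space `Hom_G(V, L)` of `G`-equivariant linear maps `V →ₗ[ℂ] L`. -/
def homG {G L V : Type*} [Group G] [AddCommGroup L] [Module ℂ L]
    [AddCommGroup V] [Module ℂ V]
    (ρ : Representation ℂ G L) (π : Representation ℂ G V) :
    Submodule ℂ (V →ₗ[ℂ] L) where
  carrier := {T | ∀ g : G, T ∘ₗ π g = ρ g ∘ₗ T}
  add_mem' := by
    intro T S hT hS g
    rw [LinearMap.add_comp, LinearMap.comp_add, hT g, hS g]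
  zero_mem' := by
    intro g
    rw [LinearMap.zero_comp, LinearMap.comp_zero]
  smul_mem' := by
    intro c T hT g
    rw [LinearMap.smul_comp, LinearMap.comp_smul, hT g]

/-!
A nonzero `T ∈ Hom_G(V, L)` is injective because `V` is irreducible. By Dixmier's lemma (if every
`φ - c` were invertible on a space of countable dimension, the vectors `(φ - c)⁻¹ v`, `c ∈ ℂ`,
would be uncountably many linearly independent vectors) the commutant of the irreducible algebra
`A` is `ℂ`, so Jacobson density writes any `S ∈ Hom_G(V, L)` as `a ∘ T` with `a ∈ A`. Splitting
off the kernel of `u ↦ u ∘ T` by a `G`-stable complement in `A` makes `a` `G`-invariant. Hence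
`Hom_G(V, L)` is a simple `A^G`-module of countable dimension, on which a central `Z` acts by an
`A^G`-endomorphism, which is a scalar by Dixmier's lemma again. Uniqueness of the scalar makes it
multiplicative and linear in `Z`.
-/

open Polynomial in
theorem isUnit_aeval_of_forall_isUnit_sub_algebraMap {K R : Type*} [Field K] [IsAlgClosed K]
    [Ring R] [Algebra K R] {φ : R} (h : ∀ c : K, IsUnit (φ - algebraMap K R c))
    {p : K[X]} (hp : p ≠ 0) : IsUnit (aeval φ p) := by
  have hroots : ∀ s : Multiset K, IsUnit (aeval φ (s.map fun c => X - C c).prod) := by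
    intro s
    induction s using Multiset.induction_on with
    | empty => simp
    | cons c s ih => simpa [map_mul] using (h c).mul ih
  rw [← C_leadingCoeff_mul_prod_multiset_X_sub_C (p := p) IsAlgClosed.card_roots_eq_natDegree,
    map_mul, aeval_C]
  exact ((leadingCoeff_ne_zero.2 hp).isUnit.map _).mul (hroots _)

open Polynomial in
theorem linearIndependent_of_sub_algebraMap_apply_eq {K M : Type*} [Field K] [AddCommGroup M]
    [Module K M] {φ : Module.End K M} (hφ : ∀ p : K[X], p ≠ 0 → Function.Injective (aeval φ p))
    {v : M} (hv : v ≠ 0) {u : K → M} (hu : ∀ c, (φ - algebraMap K _ c) (u c) = v) :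
    LinearIndependent K u := by
  classical
  refine linearIndependent_iff'.2 fun s m hm i hi => ?_
  set q : K[X] := ∑ j ∈ s, C (m j) * ∏ k ∈ s.erase j, (X - C k)
  have hprod (j) (hj : j ∈ s) :
      aeval φ (∏ k ∈ s, (X - C k)) (u j) = aeval φ (∏ k ∈ s.erase j, (X - C k)) v := by
    rw [← Finset.prod_erase_mul _ _ hj, map_mul, Module.End.mul_apply, ← hu j]
    simp
  have hqv : aeval φ q v = 0 := by
    calc aeval φ q v = aeval φ (∏ k ∈ s, (X - C k)) (∑ j ∈ s, m j • u j) := by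
          simp only [q, map_sum, map_mul, aeval_C, map_smul, LinearMap.sum_apply]
          refine Finset.sum_congr rfl fun j hj => ?_
          rw [hprod j hj]
          simp
      _ = 0 := by rw [hm, map_zero]
  have hq : q = 0 := by
    by_contra hq
    exact hv (hφ q hq (by rw [hqv, map_zero]))
  have heval : q.eval i = m i * ∏ k ∈ s.erase i, (i - k) := by
    rw [eval_finsetSum, Finset.sum_eq_single_of_mem i hi]
    · simp [eval_prod]
    · intro j hj hji
      simp [eval_prod, Finset.prod_eq_zero (Finset.mem_erase.2 ⟨Ne.symm hji, hi⟩)]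
  have hne : ∏ k ∈ s.erase i, (i - k) ≠ 0 :=
    Finset.prod_ne_zero_iff.2 fun k hk => sub_ne_zero.2 (Finset.ne_of_mem_erase hk).symm
  simpa [hq, hne] using heval

theorem Module.End.exists_not_isUnit_sub_algebraMap {M : Type*} [AddCommGroup M] [Module ℂ M]
    [Nontrivial M] (hrank : Module.rank ℂ M ≤ Cardinal.aleph0) (φ : Module.End ℂ M) :
    ∃ c : ℂ, ¬IsUnit (φ - algebraMap ℂ _ c) := by
  by_contra! h
  obtain ⟨v, hv⟩ := exists_ne (0 : M)
  have hli := linearIndependent_of_sub_algebraMap_apply_eq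
    (fun p hp => ((isUnit_iff _).1 (isUnit_aeval_of_forall_isUnit_sub_algebraMap h hp)).1)
    hv (u := fun c => (↑(h c).unit⁻¹ : Module.End ℂ M) v)
    (fun c => by rw [← Module.End.mul_apply, (h c).mul_val_inv, Module.End.one_apply])
  have hcard := hli.cardinal_lift_le_rank.trans (Cardinal.lift_le.2 hrank)
  rw [Cardinal.mk_complex, Cardinal.lift_continuum, Cardinal.lift_aleph0] at hcard
  exact Cardinal.aleph0_lt_continuum.not_ge hcard

theorem Module.End.isUnit_of_forall_commute {R M : Type*} [Ring R] [AddCommGroup M] [Module R M]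
    {S : Set (Module.End R M)}
    (hS : ∀ p : Submodule R M, (∀ T ∈ S, ∀ x ∈ p, T x ∈ p) → p = ⊥ ∨ p = ⊤)
    {ψ : Module.End R M} (hψ : ∀ T ∈ S, Commute ψ T) (hψ0 : ψ ≠ 0) : IsUnit ψ := by
  rw [Module.End.isUnit_iff]
  have hker := hS (LinearMap.ker ψ) fun T hT x hx => by
    rw [LinearMap.mem_ker] at hx ⊢
    rw [← Module.End.mul_apply, hψ T hT, Module.End.mul_apply, hx, map_zero]
  have hrange := hS (LinearMap.range ψ) fun T hT x ⟨y, hy⟩ =>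
    ⟨T y, by rw [← hy, ← Module.End.mul_apply, hψ T hT, Module.End.mul_apply]⟩
  rcases hker with hker | hker
  · rcases hrange with hrange | hrange
    · exact absurd (LinearMap.range_eq_bot.1 hrange) hψ0
    · exact ⟨LinearMap.ker_eq_bot.1 hker, LinearMap.range_eq_top.1 hrange⟩
  · exact absurd (LinearMap.ker_eq_top.1 hker) hψ0

theorem Module.End.exists_eq_algebraMap_of_forall_commute {M : Type*} [AddCommGroup M] [Module ℂ M]
    (hrank : Module.rank ℂ M ≤ Cardinal.aleph0) {S : Set (Module.End ℂ M)}
    (hS : ∀ p : Submodule ℂ M, (∀ T ∈ S, ∀ x ∈ p, T x ∈ p) → p = ⊥ ∨ p = ⊤)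
    {φ : Module.End ℂ M} (hφ : ∀ T ∈ S, Commute φ T) : ∃ c : ℂ, φ = algebraMap ℂ _ c := by
  cases subsingleton_or_nontrivial M
  · exact ⟨0, Subsingleton.elim _ _⟩
  obtain ⟨c, hc⟩ := φ.exists_not_isUnit_sub_algebraMap hrank
  refine ⟨c, sub_eq_zero.1 ?_⟩
  by_contra h0
  exact hc (isUnit_of_forall_commute hS
    (fun T hT => (hφ T hT).sub_left (Algebra.commute_algebraMap_left c T)) h0)

namespace Subalgebra

section Field

variable {K L : Type*} [Field K] [AddCommGroup L] [Module K L] (A : Subalgebra K (Module.End K L))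

theorem isSemisimpleModule_of_irreducible
    (hA : ∀ p : Submodule K L, (∀ T ∈ A, ∀ x ∈ p, T x ∈ p) → p = ⊥ ∨ p = ⊤) :
    IsSemisimpleModule A L := by
  cases subsingleton_or_nontrivial L
  · infer_instance
  have : IsSimpleModule A L := by
    refine (isSimpleModule_iff A L).2 { eq_bot_or_eq_top := fun p => ?_ }
    rcases hA (p.restrictScalars K) fun T hT x hx => p.smul_mem ⟨T, hT⟩ hx with h | h
    · exact Or.inl ((Submodule.restrictScalars_eq_bot_iff K A L).1 h)
    · exact Or.inr ((Submodule.restrictScalars_eq_top_iff K A L).1 h)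
  infer_instance

theorem exists_algHom_comp_eq_smul {V : Type*} [AddCommGroup V] [Module K V]
    (B : Subalgebra K (Module.End K L))
    {N : Submodule K (V →ₗ[K] L)} (hN : N ≠ ⊥)
    (h : ∀ Z ∈ B, ∃ c : K, ∀ T ∈ N, Z ∘ₗ T = c • T) :
    ∃ χ : B →ₐ[K] K, ∀ Z : B, ∀ T ∈ N, (Z : Module.End K L) ∘ₗ T = χ Z • T := by
  choose χ hχ using fun Z : B => h Z Z.2
  obtain ⟨T₀, hT₀, hT₀0⟩ := Submodule.exists_mem_ne_zero_of_ne_bot hN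
  have huniq {Z : B} {c : K} (hc : (Z : Module.End K L) ∘ₗ T₀ = c • T₀) : χ Z = c :=
    smul_left_injective K hT₀0 ((hχ Z T₀ hT₀).symm.trans hc)
  refine ⟨
    { toFun := χ
      map_one' := huniq ?_
      map_mul' Z₁ Z₂ := huniq ?_
      map_zero' := huniq ?_
      map_add' Z₁ Z₂ := huniq ?_
      commutes' c := huniq ?_ }, hχ⟩
  · simp [Module.End.one_eq_id]
  · rw [Subalgebra.coe_mul, Module.End.mul_eq_comp, LinearMap.comp_assoc, hχ Z₂ T₀ hT₀,
      LinearMap.comp_smul, hχ Z₁ T₀ hT₀, smul_smul, mul_comm]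
  · simp
  · rw [Subalgebra.coe_add, LinearMap.add_comp, hχ Z₁ T₀ hT₀, hχ Z₂ T₀ hT₀, add_smul]
  · ext v
    simp

end Field

variable {L : Type*} [AddCommGroup L] [Module ℂ L] (A : Subalgebra ℂ (Module.End ℂ L))

theorem exists_comp_eq_of_injective (hrank : Module.rank ℂ L ≤ Cardinal.aleph0)
    (hA : ∀ p : Submodule ℂ L, (∀ T ∈ A, ∀ x ∈ p, T x ∈ p) → p = ⊥ ∨ p = ⊤)
    {V : Type*} [AddCommGroup V] [Module ℂ V] [FiniteDimensional ℂ V] {T : V →ₗ[ℂ] L}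
    (hT : Function.Injective T) (S : V →ₗ[ℂ] L) : ∃ a ∈ A, a ∘ₗ T = S := by
  classical
  have := A.isSemisimpleModule_of_irreducible hA
  have hscalar (φ : Module.End A L) : ∃ c : ℂ, ∀ x, φ x = c • x := by
    obtain ⟨c, hc⟩ := Module.End.exists_eq_algebraMap_of_forall_commute hrank hA
      (φ := φ.restrictScalars ℂ) fun U hU => LinearMap.ext fun x => φ.map_smul ⟨U, hU⟩ x
    exact ⟨c, fun x => LinearMap.congr_fun hc x⟩
  obtain ⟨g, hg⟩ := T.exists_leftInverse_of_injective (LinearMap.ker_eq_bot.2 hT)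
  let f : Module.End (Module.End A L) L :=
    { toFun := S ∘ₗ g
      map_add' := map_add _
      map_smul' := fun φ x => by
        obtain ⟨c, hc⟩ := hscalar φ
        simp only [Module.End.smul_def, hc, map_smul, RingHom.id_apply] }
  let b := Module.finBasis ℂ V
  obtain ⟨a, ha⟩ := jacobson_density f (Finset.univ.image (T ∘ b))
  refine ⟨a, a.2, b.ext fun i => ?_⟩
  have hfT : f (T (b i)) = S (b i) := by
    simp [f, ← LinearMap.comp_apply g T, hg]
  rw [← hfT]
  exact (ha _ (Finset.mem_image_of_mem _ (Finset.mem_univ i))).symm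

end Subalgebra

theorem rank_le_aleph0_of_span_eq_top {R M : Type*} [Ring R] [StrongRankCondition R]
    [AddCommGroup M] [Module R M] {s : Set M} (hs : s.Countable) (hspan : Submodule.span R s = ⊤) :
    Module.rank R M ≤ Cardinal.aleph0 := by
  have hspan_rank := rank_span_le (R := R) s
  rw [hspan, rank_top] at hspan_rank
  exact hspan_rank.trans (Cardinal.mk_le_aleph0_iff.2 hs.to_subtype)

theorem exists_fixed_eq_of_map_fixed {ι R E U : Type*} [Ring R] [AddCommGroup E] [Module R E]
    [AddCommGroup U] [Module R U] {σ : ι → E →ₗ[R] E} {τ : ι → U →ₗ[R] U} {W : Submodule R E}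
    (hWσ : ∀ i, ∀ x ∈ W, σ i x ∈ W)
    (hW : ∀ p ≤ W, (∀ i, ∀ x ∈ p, σ i x ∈ p) →
      ∃ q ≤ W, (∀ i, ∀ x ∈ q, σ i x ∈ q) ∧ p ⊓ q = ⊥ ∧ p ⊔ q = W)
    (Φ : E →ₗ[R] U) (hΦ : ∀ i x, Φ (σ i x) = τ i (Φ x))
    {x : E} (hx : x ∈ W) (hfix : ∀ i, τ i (Φ x) = Φ x) :
    ∃ y ∈ W, (∀ i, σ i y = y) ∧ Φ y = Φ x := by
  obtain ⟨D, hDW, hDσ, hKD, hKDW⟩ := hW (W ⊓ LinearMap.ker Φ) inf_le_left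
    fun i u ⟨huW, huK⟩ => ⟨hWσ i u huW, by rw [SetLike.mem_coe, LinearMap.mem_ker, hΦ,
      LinearMap.mem_ker.1 huK, map_zero]⟩
  obtain ⟨k, hk, y, hy, rfl⟩ := Submodule.mem_sup.1 (hKDW ▸ hx)
  have hΦy : Φ y = Φ (k + y) := by rw [map_add, LinearMap.mem_ker.1 hk.2, zero_add]
  refine ⟨y, hDW hy, fun i => ?_, hΦy⟩
  have hmem : σ i y - y ∈ W ⊓ LinearMap.ker Φ ⊓ D :=
    ⟨⟨sub_mem (hWσ i y (hDW hy)) (hDW hy),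
      LinearMap.mem_ker.2 (by rw [map_sub, hΦ, hΦy, hfix, sub_self])⟩, sub_mem (hDσ i y hy) hy⟩
  rw [hKD] at hmem
  exact sub_eq_zero.1 hmem

section Frobenius

variable {G L V : Type*} [Group G] [AddCommGroup L] [Module ℂ L] [AddCommGroup V] [Module ℂ V]
  (ρ : Representation ℂ G L) (π : Representation ℂ G V)

theorem conjEnd_apply (g : G) (T : Module.End ℂ L) : conjEnd ρ g T = ρ g ∘ₗ T ∘ₗ ρ g⁻¹ := rfl

theorem conjEnd_one (g : G) : conjEnd ρ g 1 = 1 := by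
  ext v
  simp [conjEnd_apply]

theorem conjEnd_mul (g : G) (T S : Module.End ℂ L) :
    conjEnd ρ g (T * S) = conjEnd ρ g T * conjEnd ρ g S := by
  ext v
  simp [conjEnd_apply]

variable {ρ π}

theorem comp_eq_of_conjEnd_eq {b : Module.End ℂ L} {g : G} (hb : conjEnd ρ g b = b) :
    b ∘ₗ ρ g = ρ g ∘ₗ b := by
  ext v
  simpa [conjEnd_apply] using (LinearMap.congr_fun hb (ρ g v)).symm

theorem comp_mem_homG {b : Module.End ℂ L} (hb : ∀ g, conjEnd ρ g b = b) {T : V →ₗ[ℂ] L}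
    (hT : T ∈ homG ρ π) : b ∘ₗ T ∈ homG ρ π := fun g => by
  rw [LinearMap.comp_assoc, hT g, ← LinearMap.comp_assoc, comp_eq_of_conjEnd_eq (hb g),
    LinearMap.comp_assoc]

theorem injective_of_mem_homG
    (hVirr : ∀ p : Submodule ℂ V, (∀ g : G, ∀ v ∈ p, π g v ∈ p) → p = ⊥ ∨ p = ⊤)
    {T : V →ₗ[ℂ] L} (hT : T ∈ homG ρ π) (hT0 : T ≠ 0) : Function.Injective T := by
  refine LinearMap.ker_eq_bot.1 ((hVirr _ fun g v hv => ?_).resolve_right fun h => hT0 ?_)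
  · rw [LinearMap.mem_ker] at hv ⊢
    rw [← LinearMap.comp_apply, hT g, LinearMap.comp_apply, hv, map_zero]
  · exact LinearMap.ker_eq_top.1 h

theorem rank_homG_le_aleph0 [FiniteDimensional ℂ V] (hrank : Module.rank ℂ L ≤ Cardinal.aleph0) :
    Module.rank ℂ (homG ρ π) ≤ Cardinal.aleph0 := by
  refine (Submodule.rank_le _).trans ?_
  rw [Module.rank_linearMap]
  exact Cardinal.aleph0_mul_aleph0 ▸ mul_le_mul'
    (Cardinal.lift_le_aleph0.2 (Module.rank_lt_aleph0 ℂ V).le) (Cardinal.lift_le_aleph0.2 hrank)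

variable (ρ) in
def centralInvariants (A : Subalgebra ℂ (Module.End ℂ L)) : Subalgebra ℂ (Module.End ℂ L) where
  carrier := {Z | IsCentralInvariant ρ A Z}
  mul_mem' hZ₁ hZ₂ := ⟨mul_mem hZ₁.1 hZ₂.1, fun g => by rw [conjEnd_mul, hZ₁.2.1 g, hZ₂.2.1 g],
    fun D hD hDi => Commute.mul_left (hZ₁.2.2 D hD hDi) (hZ₂.2.2 D hD hDi)⟩
  add_mem' hZ₁ hZ₂ := ⟨add_mem hZ₁.1 hZ₂.1, fun g => by rw [map_add, hZ₁.2.1 g, hZ₂.2.1 g],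
    fun D hD hDi => Commute.add_left (hZ₁.2.2 D hD hDi) (hZ₂.2.2 D hD hDi)⟩
  algebraMap_mem' c := ⟨A.algebraMap_mem c,
    fun g => by rw [Algebra.algebraMap_eq_smul_one, map_smul, conjEnd_one],
    fun D _ _ => Algebra.commutes c D⟩

variable (hrank : Module.rank ℂ L ≤ Cardinal.aleph0) {A : Subalgebra ℂ (Module.End ℂ L)}
  (hAirr : ∀ p : Submodule ℂ L, (∀ T ∈ A, ∀ x ∈ p, T x ∈ p) → p = ⊥ ∨ p = ⊤)
  (hAG : ∀ g : G, ∀ T ∈ A, conjEnd ρ g T ∈ A)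
  (hAcompred : ∀ p : Submodule ℂ (Module.End ℂ L),
    p ≤ Subalgebra.toSubmodule A → (∀ g : G, ∀ S ∈ p, conjEnd ρ g S ∈ p) →
    ∃ q : Submodule ℂ (Module.End ℂ L), q ≤ Subalgebra.toSubmodule A ∧
      (∀ g : G, ∀ S ∈ q, conjEnd ρ g S ∈ q) ∧
      p ⊓ q = ⊥ ∧ p ⊔ q = Subalgebra.toSubmodule A)
  [FiniteDimensional ℂ V]
  (hVirr : ∀ p : Submodule ℂ V, (∀ g : G, ∀ v ∈ p, π g v ∈ p) → p = ⊥ ∨ p = ⊤)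
include hrank hAirr hAG hAcompred hVirr

theorem exists_invariant_comp_eq {T S : V →ₗ[ℂ] L} (hT : T ∈ homG ρ π) (hS : S ∈ homG ρ π)
    (hT0 : T ≠ 0) : ∃ b ∈ A, (∀ g, conjEnd ρ g b = b) ∧ b ∘ₗ T = S := by
  obtain ⟨a, haA, rfl⟩ := A.exists_comp_eq_of_injective hrank hAirr
    (injective_of_mem_homG hVirr hT hT0) S
  have hΦ (g : G) (u : Module.End ℂ L) :
      conjEnd ρ g u ∘ₗ T = Representation.linHom π ρ g (u ∘ₗ T) := by
    rw [conjEnd_apply, Representation.linHom_apply, LinearMap.comp_assoc, LinearMap.comp_assoc,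
      ← hT g⁻¹]
    rfl
  have hfix (g : G) : Representation.linHom π ρ g (a ∘ₗ T) = a ∘ₗ T := by
    ext v
    simpa [Representation.linHom_apply] using congr(ρ g ($(hS g⁻¹) v))
  exact exists_fixed_eq_of_map_fixed (hAG ·) hAcompred (LinearMap.lcomp ℂ L T) hΦ haA hfix

theorem IsCentralInvariant.exists_comp_eq_smul {Z : Module.End ℂ L}
    (hZ : IsCentralInvariant ρ A Z) : ∃ c : ℂ, ∀ T ∈ homG ρ π, Z ∘ₗ T = c • T := by
  let act (b : {b : Module.End ℂ L // ∀ g, conjEnd ρ g b = b}) : Module.End ℂ (homG ρ π) :=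
    (LinearMap.compRight ℂ b.1).restrict fun _ hT => comp_mem_homG b.2 hT
  have hirr (p : Submodule ℂ (homG ρ π))
      (hp : ∀ ψ ∈ act '' {b | b.1 ∈ A}, ∀ T ∈ p, ψ T ∈ p) : p = ⊥ ∨ p = ⊤ := by
    refine or_iff_not_imp_left.2 fun hne => eq_top_iff.2 fun S _ => ?_
    obtain ⟨T, hT, hT0⟩ := Submodule.exists_mem_ne_zero_of_ne_bot hne
    obtain ⟨b, hbA, hb, hbT⟩ := exists_invariant_comp_eq hrank hAirr hAG hAcompred hVirr T.2 S.2
      (by simpa using hT0)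
    convert hp _ ⟨⟨b, hb⟩, hbA, rfl⟩ T hT
    exact Subtype.ext hbT.symm
  obtain ⟨c, hc⟩ := Module.End.exists_eq_algebraMap_of_forall_commute
    (rank_homG_le_aleph0 hrank) hirr (φ := act ⟨Z, hZ.2.1⟩) <| by
      rintro _ ⟨b, hbA, rfl⟩
      ext T : 2
      exact congr($(hZ.2.2 b hbA b.2) ∘ₗ T.1)
  exact ⟨c, fun T hT => congr(Subtype.val $(LinearMap.congr_fun hc ⟨T, hT⟩))⟩

end Frobenius

theorem multiplicity_space_central_character
    {G L : Type*} [Group G] [AddCommGroup L] [Module ℂ L]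
    (ρ : Representation ℂ G L)
    -- `L` has countable dimension
    (hcount : ∃ s : Set L, s.Countable ∧ Submodule.span ℂ s = ⊤)
    (A : Subalgebra ℂ (Module.End ℂ L))
    -- `A` acts irreducibly on `L`
    (hAirr : ∀ p : Submodule ℂ L, (∀ T ∈ A, ∀ x ∈ p, T x ∈ p) → p = ⊥ ∨ p = ⊤)
    -- `A` is invariant under the conjugation `G`-action
    (hAG : ∀ g : G, ∀ T ∈ A, conjEnd ρ g T ∈ A)
    -- the `G`-action on `A` is completely reducible
    (hAcompred : ∀ p : Submodule ℂ (Module.End ℂ L),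
      p ≤ Subalgebra.toSubmodule A → (∀ g : G, ∀ S ∈ p, conjEnd ρ g S ∈ p) →
      ∃ q : Submodule ℂ (Module.End ℂ L), q ≤ Subalgebra.toSubmodule A ∧
        (∀ g : G, ∀ S ∈ q, conjEnd ρ g S ∈ q) ∧
        p ⊓ q = ⊥ ∧ p ⊔ q = Subalgebra.toSubmodule A)
    -- `(π, V)` is a finite-dimensional irreducible `G`-representation
    {V : Type*} [AddCommGroup V] [Module ℂ V] [FiniteDimensional ℂ V]
    (π : Representation ℂ G V)
    (hVirr : ∀ p : Submodule ℂ V, (∀ g : G, ∀ v ∈ p, π g v ∈ p) → p = ⊥ ∨ p = ⊤) :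
    -- every central invariant operator acts by a scalar on `Hom_G(V, L)`
    (∀ Z : Module.End ℂ L, IsCentralInvariant ρ A Z →
      ∃ c : ℂ, ∀ T ∈ homG ρ π, Z ∘ₗ T = c • T) ∧
    -- and if `Hom_G(V, L) ≠ 0`, then `Z ↦ χ(Z)` is a `ℂ`-algebra homomorphism
    (homG ρ π ≠ ⊥ → ∃ χ : Module.End ℂ L → ℂ,
      (∀ Z : Module.End ℂ L, IsCentralInvariant ρ A Z →
        ∀ T ∈ homG ρ π, Z ∘ₗ T = χ Z • T) ∧
      χ 1 = 1 ∧
      (∀ Z₁ Z₂ : Module.End ℂ L, IsCentralInvariant ρ A Z₁ →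
        IsCentralInvariant ρ A Z₂ →
        χ (Z₁ * Z₂) = χ Z₁ * χ Z₂ ∧ χ (Z₁ + Z₂) = χ Z₁ + χ Z₂) ∧
      (∀ (c : ℂ) (Z : Module.End ℂ L), IsCentralInvariant ρ A Z →
        χ (c • Z) = c * χ Z)) := by
  obtain ⟨s, hs, hspan⟩ := hcount
  have hrank := rank_le_aleph0_of_span_eq_top hs hspan
  have hscalar (Z : Module.End ℂ L) (hZ : IsCentralInvariant ρ A Z) :=
    hZ.exists_comp_eq_smul hrank hAirr hAG hAcompred hVirr
  refine ⟨hscalar, fun hne => ?_⟩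
  obtain ⟨χ, hχ⟩ := (centralInvariants ρ A).exists_algHom_comp_eq_smul hne hscalar
  classical
  let f (Z : Module.End ℂ L) : ℂ := if hZ : IsCentralInvariant ρ A Z then χ ⟨Z, hZ⟩ else 0
  have hf (Z : Module.End ℂ L) (hZ : Z ∈ centralInvariants ρ A) : f Z = χ ⟨Z, hZ⟩ := dif_pos hZ
  refine ⟨f, fun Z hZ => hf Z hZ ▸ hχ ⟨Z, hZ⟩, (hf 1 (one_mem _)).trans (map_one χ),
    fun Z₁ Z₂ hZ₁ hZ₂ => ⟨?_, ?_⟩, fun c Z hZ => ?_⟩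
  · rw [hf _ (mul_mem hZ₁ hZ₂), hf _ hZ₁, hf _ hZ₂]
    exact map_mul χ ⟨Z₁, hZ₁⟩ ⟨Z₂, hZ₂⟩
  · rw [hf _ (add_mem hZ₁ hZ₂), hf _ hZ₁, hf _ hZ₂]
    exact map_add χ ⟨Z₁, hZ₁⟩ ⟨Z₂, hZ₂⟩
  · rw [hf _ (Subalgebra.smul_mem _ hZ c), hf _ hZ]
    exact map_smul χ c ⟨Z, hZ⟩
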